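/- Let T be a bounded operator on a complex Hilbert space H with Moore–Penrose inverse T†. Then the Moore–Penrose inverse of |T| is |(T†)^*|, and the Moore–Penrose inverse of |T^*| is |T†| (i.e. |(T†)^*| satisfies the four Penrose equations for |T|, and |T†| satisfies them for |T^*|). -/

import Mathlib

open ContinuousLinearMap

variable {H : Type*} [NormedAddCommGroup H] [InnerProductSpace ℂ H] [CompleteSpace H]

/-- The absolute value `|T| = (T^*T)^(1/2)` of a bounded operator on a complex
Hilbert space, defined via the continuous functional calculus. -/
noncomputable def absOp (T : H →L[ℂ] H) : H →L[ℂ] H :=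
  cfc Real.sqrt (adjoint T * T)

/-- The orthogonal projection of `H` onto the closure of the range of `T`,
regarded as an operator on `H`. -/
noncomputable def rangeProjOp (T : H →L[ℂ] H) : H →L[ℂ] H :=
  (LinearMap.range (T : H →ₗ[ℂ] H)).topologicalClosure.subtypeL ∘L
    Submodule.orthogonalProjectionOnto (LinearMap.range (T : H →ₗ[ℂ] H)).topologicalClosure

/-- `U` is a partial isometry: `U^*U` is an orthogonal projection
(a self-adjoint idempotent). -/
def IsPartialIsometryOp (U : H →L[ℂ] H) : Prop :=
  IsSelfAdjoint (adjoint U * U) ∧ (adjoint U * U) * (adjoint U * U) = adjoint U * U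

/-- `T = U|T|` is the polar decomposition of `T`: `U` is a partial isometry and
`U^*U` is the orthogonal projection onto the closure of the range of `T^*`. -/
def IsPolarDecompositionOp (T U : H →L[ℂ] H) : Prop :=
  T = U * absOp T ∧ IsPartialIsometryOp U ∧ adjoint U * U = rangeProjOp (adjoint T)

/-- `X` is the Moore--Penrose inverse of `T`: the four Penrose equations hold. -/
def IsMoorePenroseInv (T X : H →L[ℂ] H) : Prop :=
  T * X * T = T ∧ X * T * X = X ∧ IsSelfAdjoint (T * X) ∧ IsSelfAdjoint (X * T)

/-!
Write `a = |T|` and `b = |(T†)^*|`, so `a² = T^*T` and `b² = T†(T†)^*`. The Penrose equations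
for `T` make `b²` the Moore–Penrose inverse of `a²`. Since `a²b²` is self-adjoint, `a²` and `b²`
commute, and hence so do their square roots `a` and `b`. Then `aba ≥ 0` with
`(aba)² = a²b²a² = a²`, so `aba = a`; likewise `bab = b`; and `ab`, `ba` are positive, hence
self-adjoint. The second claim is the first one for `T^*`, whose Moore–Penrose inverse is `(T†)^*`.
-/

section CStarAlgebra

variable {A : Type*} [NonUnitalCStarAlgebra A] [PartialOrder A] [StarOrderedRing A] {a b : A}

lemma Commute.of_mul_self_left (ha : 0 ≤ a) (h : Commute (a * a) b) : Commute a b := by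
  have h' := h.cfcₙ_nnreal NNReal.sqrt
  rwa [← CFC.sqrt, CFC.sqrt_mul_self a ha] at h'

lemma Commute.mul_mul_eq_self_of_mul_self (ha : 0 ≤ a) (hb : 0 ≤ b) (hab : Commute a b)
    (h : a * a * (b * b) * (a * a) = a * a) : a * b * a = a := by
  rw [← CFC.mul_self_eq_mul_self_iff (a * b * a) a (conjugate_nonneg_of_nonneg hb ha) ha]
  calc a * b * a * (a * b * a) = a * a * (b * b) * (a * a) := by
        simp only [mul_assoc, hab.left_comm]
    _ = a * a := h

end CStarAlgebra

lemma absOp_eq_cfcAbs (T : H →L[ℂ] H) : absOp T = CFC.abs T := by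
  rw [absOp, CFC.abs, CFC.sqrt_eq_real_sqrt _ (star_mul_self_nonneg T), cfcₙ_eq_cfc,
    star_eq_adjoint]

lemma absOp_nonneg (T : H →L[ℂ] H) : 0 ≤ absOp T :=
  absOp_eq_cfcAbs T ▸ CFC.abs_nonneg T

lemma absOp_mul_self (T : H →L[ℂ] H) : absOp T * absOp T = adjoint T * T := by
  rw [absOp_eq_cfcAbs, CFC.abs_mul_abs, star_eq_adjoint]

namespace IsMoorePenroseInv

variable {T X : H →L[ℂ] H}

lemma adjoint (hX : IsMoorePenroseInv T X) :
    IsMoorePenroseInv (ContinuousLinearMap.adjoint T) (ContinuousLinearMap.adjoint X) := by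
  obtain ⟨h1, h2, h3, h4⟩ := hX
  simp only [IsMoorePenroseInv, ← star_eq_adjoint, ← star_mul, ← mul_assoc, IsSelfAdjoint.star_iff,
    h1, h2, h3, h4, and_self]

lemma adjoint_mul_self (hX : IsMoorePenroseInv T X) :
    IsMoorePenroseInv (ContinuousLinearMap.adjoint T * T) (X * ContinuousLinearMap.adjoint X) := by
  obtain ⟨h1, h2, h3, h4⟩ := hX
  simp only [← star_eq_adjoint]
  have hTX : star X * star T = T * X := by rw [← star_mul, h3.star_eq]
  have hXT : star T * star X = X * T := by rw [← star_mul, h4.star_eq]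
  have hTTXX : star T * T * (X * star X) = X * T :=
    calc star T * T * (X * star X) = star T * (T * X) * star X := by simp only [mul_assoc]
      _ = (star T * star X) * (star T * star X) := by rw [← hTX]; simp only [mul_assoc]
      _ = X * T := by rw [hXT, ← mul_assoc, h2]
  have hXXTT : X * star X * (star T * T) = X * T :=
    calc X * star X * (star T * T) = X * (star X * star T) * T := by simp only [mul_assoc]
      _ = X * T := by rw [hTX, ← mul_assoc, h2]
  refine ⟨?_, ?_, hTTXX ▸ h4, hXXTT ▸ h4⟩
  · rw [hTTXX, ← hXT]
    calc star T * star X * (star T * T) = star T * (star X * star T * T) := by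
          simp only [mul_assoc]
      _ = star T * T := by rw [hTX, h1]
  · rw [hXXTT, ← mul_assoc, h2]

lemma of_mul_self {a b : H →L[ℂ] H} (ha : 0 ≤ a) (hb : 0 ≤ b)
    (h : IsMoorePenroseInv (a * a) (b * b)) : IsMoorePenroseInv a b := by
  obtain ⟨h1, h2, h3, -⟩ := h
  have hsq : Commute (a * a) (b * b) :=
    ((Commute.refl a).mul_nonneg ha ha).isSelfAdjoint.commute_iff
      ((Commute.refl b).mul_nonneg hb hb).isSelfAdjoint |>.mpr h3
  have hab : Commute a b := ((hsq.of_mul_self_left ha).symm.of_mul_self_left hb).symm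
  exact ⟨hab.mul_mul_eq_self_of_mul_self ha hb h1, hab.symm.mul_mul_eq_self_of_mul_self hb ha h2,
    (hab.mul_nonneg ha hb).isSelfAdjoint, (hab.symm.mul_nonneg hb ha).isSelfAdjoint⟩

lemma absOp (hX : IsMoorePenroseInv T X) :
    IsMoorePenroseInv (_root_.absOp T) (_root_.absOp (ContinuousLinearMap.adjoint X)) := by
  refine of_mul_self (absOp_nonneg T) (absOp_nonneg _) ?_
  rw [absOp_mul_self, absOp_mul_self, adjoint_adjoint]
  exact hX.adjoint_mul_self

end IsMoorePenroseInv

/-- If `X = T†`, then `|T|† = |(T†)^*|` and `|T^*|† = |T†|`. -/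
theorem moorePenrose_absOp (T X : H →L[ℂ] H) (hX : IsMoorePenroseInv T X) :
    IsMoorePenroseInv (absOp T) (absOp (adjoint X)) ∧
    IsMoorePenroseInv (absOp (adjoint T)) (absOp X) :=
  ⟨hX.absOp, by simpa only [adjoint_adjoint] using hX.adjoint.absOp⟩
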